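/- Let V be a finite set of nodes, E ⊆ V × V a finite set of directed edges, p : E → ℝ with 0 ≤ p(e) ≤ 1 for all e ∈ E, α, β positive integers, Θ a finite set of seed sets S_θ ⊆ V with nonnegative weights y(θ), and k a positive integer with k ≤ |V|. Define F(M) = Σ_{θ ∈ Θ} y(θ) · Σ_{X ⊆ E} Pr_p[X] · ρ^X_{S_θ}(M). Let M_0 = ∅ and, for each i < k, M_{i+1} = M_i ∪ {v_i} where v_i maximizes F(M_i ∪ {v}) over v ∈ V. Then F(M_k) − F(∅) ≥ (1 − 1/e) · max{ F(O) − F(∅) : O ⊆ V, |O| ≤ k }. -/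
import Mathlib


open scoped Classical

/-- The infected sets of the live-edge diffusion process:
`I_S(0) = S` and `I_S(t+1) = I_S(t) ∪ {w : ∃ v ∈ I_S(t), (v,w) ∈ X}`. -/
noncomputable def infect {V : Type*} [Fintype V] [DecidableEq V]
    (X : Finset (V × V)) (S : Finset V) : ℕ → Finset V
  | 0 => S
  | t + 1 => infect X S t ∪
      Finset.univ.filter (fun w => ∃ v ∈ infect X S t, (v, w) ∈ X)

/-- The set of nodes reachable from `S` via live edges of `X`. -/
noncomputable def reachSet {V : Type*} [Fintype V] [DecidableEq V]
    (X : Finset (V × V)) (S : Finset V) : Finset V :=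
  Finset.univ.filter (fun u => ∃ t, u ∈ infect X S t)

/-- The monitor set `M` detects the outbreak before `β`: there exists `t` with
`M ∩ I_S(t) ≠ ∅` and `|I_S(t)| ≤ β`. -/
def detects {V : Type*} [Fintype V] [DecidableEq V]
    (X : Finset (V × V)) (S : Finset V) (β : ℕ) (M : Finset V) : Prop :=
  ∃ t, (M ∩ infect X S t).Nonempty ∧ (infect X S t).card ≤ β

/-- The defender win indicator `ρ^X_S(M)`: equal to `1` if either the set of
nodes reachable from `S` via live edges of `X` has size less than `α`, or `M`
detects the outbreak before `β`; and `0` otherwise. -/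
noncomputable def rho {V : Type*} [Fintype V] [DecidableEq V]
    (X : Finset (V × V)) (S : Finset V) (α β : ℕ) (M : Finset V) : ℝ :=
  if (reachSet X S).card < α ∨ detects X S β M then 1 else 0

/-- The live-edge probability `Pr_p[X] = (∏_{e ∈ X} p e) · (∏_{e ∈ E \ X} (1 - p e))`. -/
noncomputable def liveProb {ι : Type*} [DecidableEq ι]
    (E : Finset ι) (p : ι → ℝ) (X : Finset ι) : ℝ :=
  (∏ e ∈ X, p e) * (∏ e ∈ E \ X, (1 - p e))

section Helpers

variable {V : Type*} [Fintype V] [DecidableEq V]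

lemma detects_mono {X : Finset (V × V)} {S : Finset V} {β : ℕ} {A B : Finset V}
    (h : A ⊆ B) : detects X S β A → detects X S β B := by
  rintro ⟨t, ⟨x, hx⟩, hc⟩
  rw [Finset.mem_inter] at hx
  exact ⟨t, ⟨x, Finset.mem_inter.2 ⟨h hx.1, hx.2⟩⟩, hc⟩

lemma rho_nonneg (X : Finset (V × V)) (S : Finset V) (α β : ℕ) (M : Finset V) :
    0 ≤ rho X S α β M := by
  unfold rho; split_ifs <;> norm_num

lemma rho_le_one (X : Finset (V × V)) (S : Finset V) (α β : ℕ) (M : Finset V) :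
    rho X S α β M ≤ 1 := by
  unfold rho; split_ifs <;> norm_num

lemma rho_mono {X : Finset (V × V)} {S : Finset V} {α β : ℕ} {A B : Finset V}
    (h : A ⊆ B) : rho X S α β A ≤ rho X S α β B := by
  unfold rho
  split_ifs with h1 h2 <;> try norm_num
  exact absurd (h1.imp id (detects_mono h)) h2

lemma rho_submod (X : Finset (V × V)) (S : Finset V) (α β : ℕ) (A B : Finset V) :
    rho X S α β (A ∪ B) - rho X S α β A ≤
      ∑ o ∈ B \ A, (rho X S α β (insert o A) - rho X S α β A) := by
  have hterm : ∀ o ∈ B \ A, 0 ≤ rho X S α β (insert o A) - rho X S α β A := by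
    intro o _
    have := rho_mono (X := X) (S := S) (α := α) (β := β)
      (Finset.subset_insert o A)
    linarith
  by_cases hA : (reachSet X S).card < α ∨ detects X S β A
  · have h1 : rho X S α β A = 1 := if_pos hA
    have h2 : rho X S α β (A ∪ B) ≤ 1 := rho_le_one _ _ _ _ _
    have h3 : 0 ≤ ∑ o ∈ B \ A, (rho X S α β (insert o A) - rho X S α β A) :=
      Finset.sum_nonneg hterm
    linarith
  · have h0 : rho X S α β A = 0 := if_neg hA
    by_cases hAB : (reachSet X S).card < α ∨ detects X S β (A ∪ B)
    · have hcard : ¬ (reachSet X S).card < α := fun h => hA (Or.inl h)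
      have hdet : detects X S β (A ∪ B) := hAB.resolve_left hcard
      obtain ⟨t, ⟨x, hx⟩, hc⟩ := hdet
      rw [Finset.mem_inter, Finset.mem_union] at hx
      have hxA : x ∉ A := by
        intro hxA
        exact hA (Or.inr ⟨t, ⟨x, Finset.mem_inter.2 ⟨hxA, hx.2⟩⟩, hc⟩)
      have hxB : x ∈ B \ A := Finset.mem_sdiff.2 ⟨hx.1.resolve_left hxA, hxA⟩
      have hins : rho X S α β (insert x A) = 1 := by
        refine if_pos (Or.inr ⟨t, ⟨x, Finset.mem_inter.2
          ⟨Finset.mem_insert_self x A, hx.2⟩⟩, hc⟩)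
      have hle : rho X S α β (insert x A) - rho X S α β A ≤
          ∑ o ∈ B \ A, (rho X S α β (insert o A) - rho X S α β A) :=
        Finset.single_le_sum hterm hxB
      have h2 : rho X S α β (A ∪ B) ≤ 1 := rho_le_one _ _ _ _ _
      linarith [hle]
    · have h2 : rho X S α β (A ∪ B) = 0 := if_neg hAB
      have h3 : 0 ≤ ∑ o ∈ B \ A, (rho X S α β (insert o A) - rho X S α β A) :=
        Finset.sum_nonneg hterm
      linarith

lemma liveProb_nonneg {ι : Type*} [DecidableEq ι] {E : Finset ι} {p : ι → ℝ}
    (hp : ∀ e ∈ E, 0 ≤ p e ∧ p e ≤ 1) {X : Finset ι} (hX : X ⊆ E) :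
    0 ≤ liveProb E p X := by
  unfold liveProb
  apply mul_nonneg
  · exact Finset.prod_nonneg fun e he => (hp e (hX he)).1
  · exact Finset.prod_nonneg fun e he => by
      have := (hp e (Finset.mem_sdiff.1 he).1).2; linarith

end Helpers

/-- Greedy monitor selection gives a `(1 − 1/e)`-approximation for the defender
oracle objective `F(M) = Σ_{θ ∈ Θ} y θ · Σ_{X ⊆ E} Pr_p[X] · ρ^X_{S_θ}(M)`
(measured as gain over `F ∅`) subject to the budget `k`. -/
theorem stmt13 {V : Type*} [Fintype V] [DecidableEq V] {Θ : Type*}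
    (E : Finset (V × V)) (p : V × V → ℝ) (hp : ∀ e ∈ E, 0 ≤ p e ∧ p e ≤ 1)
    (α β : ℕ) (hα : 0 < α) (hβ : 0 < β)
    (T : Finset Θ) (Sθ : Θ → Finset V) (y : Θ → ℝ) (hy : ∀ θ ∈ T, 0 ≤ y θ)
    (k : ℕ) (hk : 0 < k) (hkV : k ≤ Fintype.card V)
    (F : Finset V → ℝ)
    (hF : ∀ M : Finset V,
      F M = ∑ θ ∈ T, y θ * ∑ X ∈ E.powerset, liveProb E p X * rho X (Sθ θ) α β M)
    (M : ℕ → Finset V) (hM0 : M 0 = ∅)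
    (hgreedy : ∀ i < k, ∃ v : V, M (i + 1) = insert v (M i) ∧
      ∀ w : V, F (insert w (M i)) ≤ F (insert v (M i))) :
    ∀ O : Finset V, O.card ≤ k →
      F (M k) - F ∅ ≥ (1 - 1 / Real.exp 1) * (F O - F ∅) := by
  intro O hO
  -- F is monotone
  have Fmono : ∀ {A B : Finset V}, A ⊆ B → F A ≤ F B := by
    intro A B hAB
    rw [hF A, hF B]
    refine Finset.sum_le_sum fun θ hθ => ?_
    refine mul_le_mul_of_nonneg_left ?_ (hy θ hθ)
    refine Finset.sum_le_sum fun X hX => ?_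
    exact mul_le_mul_of_nonneg_left (rho_mono hAB)
      (liveProb_nonneg hp (Finset.mem_powerset.1 hX))
  -- difference formula
  have Fdiff : ∀ A B : Finset V, F B - F A =
      ∑ θ ∈ T, y θ * ∑ X ∈ E.powerset,
        liveProb E p X * (rho X (Sθ θ) α β B - rho X (Sθ θ) α β A) := by
    intro A B
    rw [hF A, hF B, ← Finset.sum_sub_distrib]
    refine Finset.sum_congr rfl fun θ _ => ?_
    rw [← mul_sub, ← Finset.sum_sub_distrib]
    congr 1
    exact Finset.sum_congr rfl fun X _ => by ring
  -- F submodular (in summed-marginals form)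
  have Fsub : ∀ A B : Finset V, F (A ∪ B) - F A ≤
      ∑ o ∈ B \ A, (F (insert o A) - F A) := by
    intro A B
    have hrw : ∑ o ∈ B \ A, (F (insert o A) - F A) =
        ∑ θ ∈ T, y θ * ∑ X ∈ E.powerset, liveProb E p X *
          ∑ o ∈ B \ A, (rho X (Sθ θ) α β (insert o A) - rho X (Sθ θ) α β A) := by
      rw [Finset.sum_congr rfl fun o (_ : o ∈ B \ A) => Fdiff A (insert o A)]
      rw [Finset.sum_comm]
      refine Finset.sum_congr rfl fun θ _ => ?_
      rw [← Finset.mul_sum]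
      congr 1
      rw [Finset.sum_comm]
      exact Finset.sum_congr rfl fun X _ => (Finset.mul_sum _ _ _).symm
    rw [hrw, Fdiff A (A ∪ B)]
    refine Finset.sum_le_sum fun θ hθ => ?_
    refine mul_le_mul_of_nonneg_left ?_ (hy θ hθ)
    refine Finset.sum_le_sum fun X hX => ?_
    exact mul_le_mul_of_nonneg_left (rho_submod _ _ _ _ _ _)
      (liveProb_nonneg hp (Finset.mem_powerset.1 hX))
  -- greedy step is nonnegative and large
  have hkpos : (0:ℝ) < (k:ℝ) := by exact_mod_cast hk
  have step : ∀ i < k, F O - F (M i) ≤ (k:ℝ) * (F (M (i+1)) - F (M i)) := by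
    intro i hi
    obtain ⟨v, hv, hvmax⟩ := hgreedy i hi
    have hΔ : 0 ≤ F (M (i+1)) - F (M i) := by
      have := Fmono (Finset.subset_insert v (M i))
      rw [← hv] at this
      linarith
    have h1 : F O - F (M i) ≤ F (M i ∪ O) - F (M i) := by
      have := Fmono (Finset.subset_union_right (s₁ := M i) (s₂ := O))
      linarith
    have h2 := Fsub (M i) O
    have h3 : ∑ o ∈ O \ M i, (F (insert o (M i)) - F (M i)) ≤
        ∑ _o ∈ O \ M i, (F (M (i+1)) - F (M i)) := by
      refine Finset.sum_le_sum fun o _ => ?_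
      have := hvmax o
      rw [← hv] at this
      linarith
    have h4 : ∑ _o ∈ O \ M i, (F (M (i+1)) - F (M i)) =
        ((O \ M i).card : ℝ) * (F (M (i+1)) - F (M i)) := by
      rw [Finset.sum_const, nsmul_eq_mul]
    have hcard : ((O \ M i).card : ℝ) ≤ (k:ℝ) := by
      have : (O \ M i).card ≤ O.card := Finset.card_le_card (Finset.sdiff_subset)
      exact_mod_cast le_trans this hO
    have h5 : ((O \ M i).card : ℝ) * (F (M (i+1)) - F (M i)) ≤
        (k:ℝ) * (F (M (i+1)) - F (M i)) := mul_le_mul_of_nonneg_right hcard hΔ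
    calc F O - F (M i) ≤ F (M i ∪ O) - F (M i) := h1
      _ ≤ _ := h2
      _ ≤ _ := h3
      _ = _ := h4
      _ ≤ _ := h5
  -- iterate: F O - F (M j) ≤ (1 - 1/k)^j * (F O - F (M 0))
  have hq0 : (0:ℝ) ≤ 1 - 1/(k:ℝ) := by
    have h1 : (1:ℝ) ≤ (k:ℝ) := by exact_mod_cast hk
    have h2 : 1/(k:ℝ) ≤ 1 := by rw [div_le_one hkpos]; exact h1
    linarith
  have iter : ∀ j ≤ k, F O - F (M j) ≤ (1 - 1/(k:ℝ))^j * (F O - F (M 0)) := by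
    intro j
    induction j with
    | zero => intro _; simp
    | succ i ih =>
      intro hik
      have hi : i < k := Nat.lt_of_succ_le hik
      have hstep := step i hi
      have hdiv : (F O - F (M i)) / (k:ℝ) ≤ F (M (i+1)) - F (M i) :=
        (div_le_iff₀ hkpos).2 (by linarith [hstep])
      have key : F O - F (M (i+1)) ≤ (1 - 1/(k:ℝ)) * (F O - F (M i)) := by
        have hexp : (1 - 1/(k:ℝ)) * (F O - F (M i)) =
            (F O - F (M i)) - (F O - F (M i)) / (k:ℝ) := by ring
        rw [hexp]
        linarith
      calc F O - F (M (i+1)) ≤ (1 - 1/(k:ℝ)) * (F O - F (M i)) := key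
        _ ≤ (1 - 1/(k:ℝ)) * ((1 - 1/(k:ℝ))^i * (F O - F (M 0))) :=
            mul_le_mul_of_nonneg_left (ih (le_of_lt hi)) hq0
        _ = (1 - 1/(k:ℝ))^(i+1) * (F O - F (M 0)) := by ring
  have hF0 : F (M 0) = F ∅ := by rw [hM0]
  have hg0 : 0 ≤ F O - F ∅ := by
    have hmono := Fmono (Finset.empty_subset O)
    linarith
  -- (1 - 1/k)^k ≤ 1 / e
  have hpow : (1 - 1/(k:ℝ))^k ≤ 1 / Real.exp 1 := by
    have h1 : (1 - 1/(k:ℝ)) ≤ Real.exp (-(1/(k:ℝ))) := by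
      have := Real.add_one_le_exp (-(1/(k:ℝ)))
      linarith
    have h2 : (1 - 1/(k:ℝ))^k ≤ (Real.exp (-(1/(k:ℝ))))^k :=
      pow_le_pow_left₀ hq0 h1 k
    have h3 : (Real.exp (-(1/(k:ℝ))))^k = Real.exp (-1) := by
      rw [← Real.exp_nat_mul]
      congr 1
      field_simp
    rw [h3] at h2
    calc (1 - 1/(k:ℝ))^k ≤ Real.exp (-1) := h2
      _ = 1 / Real.exp 1 := by rw [Real.exp_neg, one_div]
  have hgk : F O - F (M k) ≤ (1 / Real.exp 1) * (F O - F ∅) := by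
    calc F O - F (M k) ≤ (1 - 1/(k:ℝ))^k * (F O - F (M 0)) := iter k (le_refl k)
      _ = (1 - 1/(k:ℝ))^k * (F O - F ∅) := by rw [hF0]
      _ ≤ (1 / Real.exp 1) * (F O - F ∅) := mul_le_mul_of_nonneg_right hpow hg0
  nlinarith [hgk, hg0]
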